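/- Let ω = (ω₀, …, ω_{n+1}) be a key sequence, θ = (θ₁, …, θ_n) ∈ (ℂ*)ⁿ, and g₀, …, g_{n+1} ∈ R := ℂ[x, x⁻¹, y] the associated key forms. Then the family 𝓑 := { g₀^{β₀}·g₁^{β₁}⋯g_{n+1}^{β_{n+1}} : β₀ ∈ ℤ, 0 ≤ β_j < α_j for 1 ≤ j ≤ n, β_{n+1} ∈ ℤ_{≥0} } is a ℂ-vector-space basis of R. -/

import Mathlib

/-- `dks ω k` is `gcd(|ω₀|, …, |ω_k|)`. -/
def dks (ω : ℕ → ℤ) (k : ℕ) : ℕ :=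
  (Finset.range (k + 1)).gcd fun j => (ω j).natAbs

/-- `alphaK ω k` is `α_k = d_{k−1}/d_k`. -/
def alphaK (ω : ℕ → ℤ) (k : ℕ) : ℕ := dks ω (k - 1) / dks ω k

/-- A key sequence `(ω₀, …, ω_{n+1})`. -/
def IsKeySequence (n : ℕ) (ω : ℕ → ℤ) : Prop :=
  1 ≤ ω 0 ∧ dks ω (n + 1) = 1 ∧
    ∀ k, 1 ≤ k → k ≤ n → ω (k + 1) < (alphaK ω k : ℤ) * ω k

/-- `β k` is, for `1 ≤ k ≤ n`, the unique representation tuple of `α_k·ω_k`: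
`0 ≤ β_{k,j} < α_j` for `1 ≤ j ≤ k−1` and `α_k·ω_k = Σ_{j=0}^{k−1} β_{k,j}·ω_j`. -/
def IsRepTuple (n : ℕ) (ω : ℕ → ℤ) (β : ℕ → ℕ → ℤ) : Prop :=
  ∀ k, 1 ≤ k → k ≤ n →
    (∀ j, 1 ≤ j → j < k → 0 ≤ β k j ∧ β k j < (alphaK ω j : ℤ)) ∧
      (alphaK ω k : ℤ) * ω k = ∑ j ∈ Finset.range k, β k j * ω j

/-- The ring `R = ℂ[x, x⁻¹, y]`, realized as polynomials in `y` over Laurent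
polynomials in `x`:  `x` is `C (T 1)` and `y` is `X`. -/
abbrev RR : Type := Polynomial (LaurentPolynomial ℂ)

/-- `g 0, …, g (n+1)` are the key forms associated to the key sequence `ω`,
`θ ∈ (ℂ*)ⁿ` and the representation tuples `β`:  `g₀ = x`, `g₁ = y` and
`g_{k+1} = g_k^{α_k} − θ_k·x^{β_{k,0}}·g₁^{β_{k,1}}⋯g_{k−1}^{β_{k,k−1}}` for `1 ≤ k ≤ n`
(the possibly negative power `g₀^{β_{k,0}}` is the Laurent monomial `T (β_{k,0})`). -/
def KeyForms (n : ℕ) (ω : ℕ → ℤ) (θ : ℕ → ℂ) (β : ℕ → ℕ → ℤ) (g : ℕ → RR) : Prop :=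
  g 0 = Polynomial.C (LaurentPolynomial.T 1) ∧ g 1 = Polynomial.X ∧
    ∀ k, 1 ≤ k → k ≤ n →
      g (k + 1) = g k ^ alphaK ω k -
        Polynomial.C (LaurentPolynomial.C (θ k) * LaurentPolynomial.T (β k 0)) *
          ∏ j ∈ Finset.Ico 1 k, g j ^ (β k j).toNat

/-- The family `𝓑`: indexed by `(β₀, (β₁,…,β_n), β_{n+1}) ∈ ℤ × ∏_j Fin α_j × ℕ`,
the element `g₀^{β₀}·g₁^{β₁}⋯g_n^{β_n}·g_{n+1}^{β_{n+1}}` of `R` (again `g₀^{β₀}` with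
`β₀ ∈ ℤ` is the Laurent monomial `T β₀`). -/
noncomputable def Bfam (n : ℕ) (ω : ℕ → ℤ) (g : ℕ → RR) :
    ℤ × ((j : Fin n) → Fin (alphaK ω ((j : ℕ) + 1))) × ℕ → RR :=
  fun p =>
    Polynomial.C (LaurentPolynomial.T p.1) *
      (∏ j : Fin n, g ((j : ℕ) + 1) ^ (p.2.1 j : ℕ)) * g (n + 1) ^ p.2.2

/-!
Over `A = ℂ[x, x⁻¹]` each key form `g_{k+1}` is monic in `y` of degree `α_1⋯α_k`: the term
subtracted from `g_k^{α_k}` has `y`-degree at most `Σ_{j<k} (α_j - 1)·α_1⋯α_{j-1} < α_1⋯α_k`.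
Hence `g_1^{β_1}⋯g_n^{β_n}·g_{n+1}^m` is monic of `y`-degree the mixed-radix number
`Σ β_j·α_1⋯α_{j-1} + m·α_1⋯α_n`, and these degrees run through `ℕ` exactly once. Monic
polynomials, one of each degree, form an `A`-basis of `A[y]`; combined with the `ℂ`-basis
`(x^a)_{a ∈ ℤ}` of `A` this gives the `ℂ`-basis `𝓑`.
-/

open Polynomial LaurentPolynomial Finset

theorem Nat.sum_mul_prod_range_lt_prod_range {r f : ℕ → ℕ} {k : ℕ} (hf : ∀ j < k, f j < r j) :
    ∑ j ∈ range k, f j * ∏ i ∈ range j, r i < ∏ i ∈ range k, r i := by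
  induction k with
  | zero => simp
  | succ k ih =>
    rw [sum_range_succ, prod_range_succ]
    calc _ < ∏ i ∈ range k, r i + f k * ∏ i ∈ range k, r i :=
          Nat.add_lt_add_right (ih fun j hj => hf j (by omega)) _
      _ = (f k + 1) * ∏ i ∈ range k, r i := by ring
      _ ≤ _ := by rw [mul_comm]; gcongr; exact hf k (by omega)

noncomputable def mixedRadixEquiv (n : ℕ) (r : ℕ → ℕ) [NeZero (∏ i : Fin n, r i)] :
    ((j : Fin n) → Fin (r j)) × ℕ ≃ ℕ :=
  (finPiFinEquiv.prodCongr (Equiv.refl ℕ)).trans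
    ((Equiv.prodComm _ _).trans (Nat.divModEquiv _).symm)

theorem mixedRadixEquiv_apply (n : ℕ) (r : ℕ → ℕ) [NeZero (∏ i : Fin n, r i)]
    (p : ((j : Fin n) → Fin (r j)) × ℕ) :
    mixedRadixEquiv n r p =
      ∑ j : Fin n, (p.1 j : ℕ) * ∏ i ∈ range j, r i + p.2 * ∏ i ∈ range n, r i := by
  simp [mixedRadixEquiv, finPiFinEquiv_apply, Fin.prod_univ_eq_prod_range, add_comm]

namespace Polynomial

variable {A ι : Type*} [CommRing A] [IsDomain A]

noncomputable def basisOfMonic (M : ι → A[X]) (e : ι ≃ ℕ) (hM : ∀ i, (M i).Monic)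
    (hdeg : ∀ i, (M i).natDegree = e i) : Module.Basis ι A A[X] :=
  (Sequence.basis ⟨M ∘ e.symm, fun N => by
      simp [degree_eq_natDegree (hM _).ne_zero, hdeg]⟩
    fun N => by simp [(hM _).leadingCoeff]).reindex e.symm

theorem coe_basisOfMonic (M : ι → A[X]) (e : ι ≃ ℕ) (hM : ∀ i, (M i).Monic)
    (hdeg : ∀ i, (M i).natDegree = e i) : ⇑(basisOfMonic M e hM hdeg) = M := by
  ext1 i
  simp [basisOfMonic]

end Polynomial

section MixedMonomial

variable {A : Type*} [CommRing A]

theorem natDegree_prod_range_pow_lt {g : ℕ → A[X]} {r e : ℕ → ℕ} {k : ℕ}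
    (hg : ∀ j < k, (g (j + 1)).natDegree = ∏ i ∈ range j, r i) (he : ∀ j < k, e j < r j) :
    (∏ j ∈ range k, g (j + 1) ^ e j).natDegree < ∏ i ∈ range k, r i :=
  calc _ ≤ ∑ j ∈ range k, (g (j + 1) ^ e j).natDegree := natDegree_prod_le _ _
    _ ≤ ∑ j ∈ range k, e j * ∏ i ∈ range j, r i := sum_le_sum fun j hj =>
        natDegree_pow_le.trans_eq (by rw [hg j (mem_range.1 hj)])
    _ < _ := Nat.sum_mul_prod_range_lt_prod_range he

noncomputable def mixedMonomial (n : ℕ) (r : ℕ → ℕ) (g : ℕ → A[X])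
    (p : ((j : Fin n) → Fin (r j)) × ℕ) : A[X] :=
  (∏ j : Fin n, g (j + 1) ^ (p.1 j : ℕ)) * g (n + 1) ^ p.2

variable {n : ℕ} {r : ℕ → ℕ} {g : ℕ → A[X]}

theorem monic_mixedMonomial (hg : ∀ k ≤ n, (g (k + 1)).Monic)
    (p : ((j : Fin n) → Fin (r j)) × ℕ) : (mixedMonomial n r g p).Monic :=
  (monic_prod_of_monic _ _ fun (j : Fin n) _ => (hg j j.isLt.le).pow _).mul ((hg n le_rfl).pow _)

theorem natDegree_mixedMonomial [NeZero (∏ i : Fin n, r i)]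
    (hg : ∀ k ≤ n, (g (k + 1)).Monic ∧ (g (k + 1)).natDegree = ∏ i ∈ range k, r i)
    (p : ((j : Fin n) → Fin (r j)) × ℕ) :
    (mixedMonomial n r g p).natDegree = mixedRadixEquiv n r p := by
  have hprod : (∏ j : Fin n, g (j + 1) ^ (p.1 j : ℕ)).Monic :=
    monic_prod_of_monic _ _ fun (j : Fin n) _ => (hg j j.isLt.le).1.pow _
  rw [mixedMonomial, hprod.natDegree_mul ((hg n le_rfl).1.pow _),
    natDegree_prod_of_monic _ _ fun (j : Fin n) _ => (hg j j.isLt.le).1.pow _,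
    (hg n le_rfl).1.natDegree_pow, (hg n le_rfl).2, mixedRadixEquiv_apply]
  congr 1
  refine sum_congr rfl fun j _ => ?_
  rw [(hg j j.isLt.le).1.natDegree_pow, (hg j j.isLt.le).2]

end MixedMonomial

theorem dks_pos {ω : ℕ → ℤ} (h0 : 1 ≤ ω 0) (k : ℕ) : 0 < dks ω k := by
  refine Nat.pos_of_ne_zero fun h => ?_
  rw [dks, Finset.gcd_eq_zero_iff] at h
  have := h 0 (by simp)
  omega

theorem alphaK_pos {ω : ℕ → ℤ} (h0 : 1 ≤ ω 0) (k : ℕ) : 0 < alphaK ω k :=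
  Nat.div_pos (Nat.le_of_dvd (dks_pos h0 _) (gcd_mono (range_subset_range.2 (by omega))))
    (dks_pos h0 k)

theorem KeyForms.monic_natDegree {n : ℕ} {ω : ℕ → ℤ} {θ : ℕ → ℂ} {β : ℕ → ℕ → ℤ} {g : ℕ → RR}
    (hg : KeyForms n ω θ β g) (h0 : 1 ≤ ω 0) (hβ : IsRepTuple n ω β) :
    ∀ k ≤ n, (g (k + 1)).Monic ∧ (g (k + 1)).natDegree = ∏ i ∈ range k, alphaK ω (i + 1) := by
  intro k
  induction k using Nat.strong_induction_on with
  | _ k ih =>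
  intro hk
  rcases k with _ | k
  · simp [hg.2.1]
  obtain ⟨hgk, hdk⟩ := ih k (by omega) (by omega)
  have htail : (Polynomial.C (LaurentPolynomial.C (θ (k + 1)) * T (β (k + 1) 0)) *
      ∏ j ∈ Ico 1 (k + 1), g j ^ (β (k + 1) j).toNat).natDegree <
        (g (k + 1) ^ alphaK ω (k + 1)).natDegree := by
    have hshift : ∏ j ∈ Ico 1 (k + 1), g j ^ (β (k + 1) j).toNat =
        ∏ j ∈ range k, g (j + 1) ^ (β (k + 1) (j + 1)).toNat := by
      rw [prod_Ico_eq_prod_range, Nat.add_sub_cancel]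
      simp only [add_comm 1]
    rw [hgk.natDegree_pow, hdk, hshift]
    calc _ ≤ (∏ j ∈ range k, g (j + 1) ^ (β (k + 1) (j + 1)).toNat).natDegree :=
          natDegree_C_mul_le _ _
      _ < ∏ i ∈ range k, alphaK ω (i + 1) := by
          refine natDegree_prod_range_pow_lt (fun j hj => (ih j (by omega) (by omega)).2)
            fun j hj => ?_
          have := (hβ (k + 1) (by omega) (by omega)).1 (j + 1) (by omega) (by omega)
          omega
      _ ≤ alphaK ω (k + 1) * ∏ i ∈ range k, alphaK ω (i + 1) :=
          Nat.le_mul_of_pos_left _ (alphaK_pos h0 _)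
  rw [hg.2.2 (k + 1) (by omega) (by omega)]
  refine ⟨(hgk.pow _).sub_of_left (degree_lt_degree htail), ?_⟩
  rw [natDegree_sub_eq_left_of_natDegree_lt htail, hgk.natDegree_pow, hdk, prod_range_succ,
    mul_comm]

theorem stmt2_general (n : ℕ) (ω : ℕ → ℤ) (θ : ℕ → ℂ) (β : ℕ → ℕ → ℤ) (g : ℕ → RR)
    (hω : IsKeySequence n ω)
    (hβ : IsRepTuple n ω β) (hg : KeyForms n ω θ β g) :
    LinearIndependent ℂ (Bfam n ω g) ∧
      Submodule.span ℂ (Set.range (Bfam n ω g)) = ⊤ := by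
  let r : ℕ → ℕ := fun i => alphaK ω (i + 1)
  have hdeg := hg.monic_natDegree hω.1 hβ
  have : NeZero (∏ i : Fin n, r i) := ⟨prod_ne_zero_iff.2 fun i _ => (alphaK_pos hω.1 _).ne'⟩
  let b := (AddMonoidAlgebra.basis ℤ ℂ).smulTower <|
    basisOfMonic (mixedMonomial n r g) (mixedRadixEquiv n r)
      (monic_mixedMonomial fun k hk => (hdeg k hk).1) (natDegree_mixedMonomial hdeg)
  have hT : ∀ a, AddMonoidAlgebra.basis ℤ ℂ a = (T a : LaurentPolynomial ℂ) := fun _ => rfl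
  have hb : ⇑b = Bfam n ω g := by
    ext1 ⟨a, p⟩
    simp only [b, Module.Basis.smulTower_apply, coe_basisOfMonic, hT, Polynomial.smul_eq_C_mul,
      mixedMonomial, Bfam, mul_assoc]
  exact hb ▸ ⟨b.linearIndependent, b.span_eq⟩

/-- The family `𝓑` is a `ℂ`-vector-space basis of `R = ℂ[x, x⁻¹, y]`. -/
theorem stmt2 (n : ℕ) (ω : ℕ → ℤ) (θ : ℕ → ℂ) (β : ℕ → ℕ → ℤ) (g : ℕ → RR)
    (hω : IsKeySequence n ω) (hθ : ∀ k, 1 ≤ k → k ≤ n → θ k ≠ 0)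
    (hβ : IsRepTuple n ω β) (hg : KeyForms n ω θ β g) :
    LinearIndependent ℂ (Bfam n ω g) ∧
      Submodule.span ℂ (Set.range (Bfam n ω g)) = ⊤ :=
  stmt2_general n ω θ β g hω hβ hg
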